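/- If G is connected and {A,B} is a maximum bisection with organized partition {A₁,A₂,B₁,B₂}, then E(A₁,B₁) + E(A₂,B₂) ≠ 0. -/
import Mathlib


open Finset

/-- Number of edges of `G` with one endpoint in `X` and the other in `Y`
(for disjoint `X`, `Y`). -/
def EC {V : Type*} [Fintype V] [DecidableEq V] (G : SimpleGraph V)
    [DecidableRel G.Adj] (X Y : Finset V) : ℕ :=
  ((X ×ˢ Y).filter (fun p => G.Adj p.1 p.2)).card

/-- `{R, S}` is a bisection of the vertex set. -/
def IsBisection {V : Type*} [Fintype V] [DecidableEq V] (R S : Finset V) : Prop :=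
  R ∪ S = Finset.univ ∧ Disjoint R S ∧ R.card = S.card

section Aux

variable {V : Type*} [Fintype V] [DecidableEq V] (G : SimpleGraph V) [DecidableRel G.Adj]

lemma EC_comm (X Y : Finset V) : EC G X Y = EC G Y X := by
  unfold EC
  apply Finset.card_bij' (fun p _ => (p.2, p.1)) (fun p _ => (p.2, p.1)) <;>
    simp +contextual [And.comm, G.adj_comm]

lemma EC_union_left (X Y Z : Finset V) (h : Disjoint X Y) :
    EC G (X ∪ Y) Z = EC G X Z + EC G Y Z := by
  unfold EC
  rw [Finset.union_product, Finset.filter_union, Finset.card_union_of_disjoint]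
  refine Finset.disjoint_filter_filter ?_
  rw [Finset.disjoint_left]
  intro p hp hq
  simp only [Finset.mem_product] at hp hq
  exact (Finset.disjoint_left.1 h) hp.1 hq.1

lemma EC_union_right (X Y Z : Finset V) (h : Disjoint Y Z) :
    EC G X (Y ∪ Z) = EC G X Y + EC G X Z := by
  rw [EC_comm, EC_union_left G _ _ _ h, EC_comm G Y, EC_comm G Z]

lemma EC_no_adj {X Y : Finset V} (h : EC G X Y = 0) :
    ∀ a ∈ X, ∀ b ∈ Y, ¬ G.Adj a b := by
  intro a ha b hb hab
  have : (a, b) ∈ (X ×ˢ Y).filter (fun p => G.Adj p.1 p.2) := by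
    simp [Finset.mem_product, ha, hb, hab]
  simpa [EC, Finset.card_eq_zero.1 h] using this

lemma walk_cross (X : Finset V) : ∀ {u v : V}, G.Walk u v → u ∈ X → v ∉ X →
    ∃ a b, a ∈ X ∧ b ∉ X ∧ G.Adj a b := by
  intro u v p
  induction p with
  | nil => intro hu hv; exact absurd hu hv
  | @cons a b c h p ih =>
    intro hu hv
    by_cases hb : b ∈ X
    · exact ih hb hv
    · exact ⟨a, b, hu, hb, h⟩

end Aux

theorem stmt6 {V : Type*} [Fintype V] [DecidableEq V] (G : SimpleGraph V)
    [DecidableRel G.Adj] (n : ℕ) (A B A₁ A₂ B₁ B₂ : Finset V)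
    (hconn : G.Connected)
    (hcard : Fintype.card V = 4 * n)
    (hbis : IsBisection A B) (hA2n : A.card = 2 * n)
    (hmax : ∀ R S : Finset V, IsBisection R S → EC G R S ≤ EC G A B)
    (hA : A = A₁ ∪ A₂) (hA12 : Disjoint A₁ A₂)
    (hB : B = B₁ ∪ B₂) (hB12 : Disjoint B₁ B₂)
    (hA1 : A₁.card = n) (hA2 : A₂.card = n) (hB1 : B₁.card = n) (hB2 : B₂.card = n)
    (horg : ∀ A₁' A₂' B₁' B₂' : Finset V,
      A = A₁' ∪ A₂' → Disjoint A₁' A₂' → B = B₁' ∪ B₂' → Disjoint B₁' B₂' →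
      A₁'.card = n → A₂'.card = n → B₁'.card = n → B₂'.card = n →
      (EC G A₁ A₂ + EC G B₁ B₂ : ℤ) - EC G A₁ B₁ - EC G A₂ B₂ ≤
        (EC G A₁' A₂' + EC G B₁' B₂' : ℤ) - EC G A₁' B₁' - EC G A₂' B₂') :
    EC G A₁ B₁ + EC G A₂ B₂ ≠ 0 := by
  intro h
  have h1 : EC G A₁ B₁ = 0 := by omega
  have h2 : EC G A₂ B₂ = 0 := by omega
  -- n is positive
  have hn : 0 < n := by
    rcases Nat.eq_zero_or_pos n with h0 | h0
    · exfalso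
      obtain ⟨v⟩ := hconn.nonempty
      have := Fintype.card_pos_iff.2 ⟨v⟩
      omega
    · exact h0
  obtain ⟨hAB, hABdisj, _⟩ := hbis
  -- disjointness facts
  have dA1B1 : Disjoint A₁ B₁ := hABdisj.mono (hA ▸ subset_union_left) (hB ▸ subset_union_left)
  have dA1B2 : Disjoint A₁ B₂ := hABdisj.mono (hA ▸ subset_union_left) (hB ▸ subset_union_right)
  have dA2B1 : Disjoint A₂ B₁ := hABdisj.mono (hA ▸ subset_union_right) (hB ▸ subset_union_left)
  have dA2B2 : Disjoint A₂ B₂ := hABdisj.mono (hA ▸ subset_union_right) (hB ▸ subset_union_right)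
  -- the bisection {A₁ ∪ B₁, A₂ ∪ B₂}
  have hbis' : IsBisection (A₁ ∪ B₁) (A₂ ∪ B₂) := by
    refine ⟨?_, ?_, ?_⟩
    · have : A₁ ∪ B₁ ∪ (A₂ ∪ B₂) = A₁ ∪ A₂ ∪ (B₁ ∪ B₂) := by
        ext x; simp; tauto
      rw [this, ← hA, ← hB, hAB]
    · simp only [Finset.disjoint_union_left, Finset.disjoint_union_right]
      exact ⟨⟨hA12, dA2B1.symm⟩, dA1B2, hB12⟩
    · rw [Finset.card_union_of_disjoint dA1B1, Finset.card_union_of_disjoint dA2B2,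
        hA1, hA2, hB1, hB2]
  -- expand EC for both bisections
  have eAB : EC G A B = EC G A₁ B₁ + EC G A₁ B₂ + (EC G A₂ B₁ + EC G A₂ B₂) := by
    rw [hA, hB, EC_union_left G _ _ _ hA12, EC_union_right G _ _ _ hB12,
      EC_union_right G _ _ _ hB12]
  have eRS : EC G (A₁ ∪ B₁) (A₂ ∪ B₂) =
      EC G A₁ A₂ + EC G A₁ B₂ + (EC G B₁ A₂ + EC G B₁ B₂) := by
    rw [EC_union_left G _ _ _ dA1B1, EC_union_right G A₁ _ _ dA2B2,
      EC_union_right G B₁ _ _ dA2B2]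
  have hmax' := hmax _ _ hbis'
  rw [eAB, eRS, EC_comm G B₁ A₂] at hmax'
  have hAA : EC G A₁ A₂ = 0 := by omega
  have hBB : EC G B₁ B₂ = 0 := by omega
  -- swap B₁ and B₂ in the organized partition
  have horg' := horg A₁ A₂ B₂ B₁ hA hA12 (by rw [hB, Finset.union_comm]) hB12.symm
    hA1 hA2 hB2 hB1
  rw [EC_comm G B₂ B₁] at horg'
  have hcast : EC G A₁ B₂ + EC G A₂ B₁ = 0 := by
    have : (EC G A₁ B₂ : ℤ) + EC G A₂ B₁ ≤ 0 := by
      rw [h1, h2, hAA, hBB] at horg'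
      push_cast at horg' ⊢
      linarith
    have h3 : (0 : ℤ) ≤ EC G A₁ B₂ := Int.natCast_nonneg _
    have h4 : (0 : ℤ) ≤ EC G A₂ B₁ := Int.natCast_nonneg _
    have := le_antisymm this (by linarith)
    exact_mod_cast this
  have hAB2 : EC G A₁ B₂ = 0 := by omega
  -- A₁ has no edges to the rest of the graph: contradiction with connectivity
  obtain ⟨a, ha⟩ := Finset.card_pos.1 (hA1 ▸ hn)
  obtain ⟨b, hb⟩ := Finset.card_pos.1 (hB1 ▸ hn)
  have hbA1 : b ∉ A₁ := fun hbA1 => (Finset.disjoint_left.1 dA1B1) hbA1 hb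
  obtain ⟨p⟩ := hconn.preconnected a b
  obtain ⟨x, y, hx, hy, hadj⟩ := walk_cross G A₁ p ha hbA1
  have hyuniv : y ∈ A ∪ B := by rw [hAB]; exact Finset.mem_univ y
  rw [hA, hB] at hyuniv
  simp only [Finset.mem_union] at hyuniv
  rcases hyuniv with (hy1 | hy2) | hy3 | hy4
  · exact hy hy1
  · exact EC_no_adj G hAA x hx y hy2 hadj
  · exact EC_no_adj G h1 x hx y hy3 hadj
  · exact EC_no_adj G hAB2 x hx y hy4 hadj
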